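/- arXiv:math/0309151 — 6 statements merged into one kernel-verified Lean document; each statement's English description precedes it below -/
import Mathlib

section
/- Let G be a finite simple graph with independence number α = α(G) and clique number ω(G). If ω(G) ≤ α(G), then the number of independent sets of size α is at most the number of independent sets of size α − 1, i.e., s_α ≤ s_{α−1}. -/
open Classical in
/-- The set of stable (independent) sets of a graph, as finsets. -/
noncomputable def stableSets {V : Type*} [Fintype V] (G : SimpleGraph V) : Finset (Finset V) :=
  Finset.univ.filter (fun s : Finset V => ∀ v ∈ s, ∀ w ∈ s, ¬ G.Adj v w)

/-- The independence number: the maximum size of a stable set. -/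
noncomputable def indepNum {V : Type*} [Fintype V] (G : SimpleGraph V) : ℕ :=
  (stableSets G).sup Finset.card

open Classical in
/-- `sCount G k` is the number of stable sets of cardinality `k` in `G`. -/
noncomputable def sCount {V : Type*} [Fintype V] (G : SimpleGraph V) (k : ℕ) : ℕ :=
  ((stableSets G).filter (fun s => s.card = k)).card

/-- The clique number: the independence number of the complement. -/
noncomputable def cliqueNum {V : Type*} [Fintype V] (G : SimpleGraph V) : ℕ :=
  indepNum Gᶜ

/-!
Double count the pairs `B ⊆ A` of stable sets with `#A = α` and `#B = α - 1`. Each `A` contains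
exactly `α` such `B`. Each `B` lies in at most `ω` such `A`: the vertices `v` for which `B ∪ {v}`
is stable form a clique, since two non-adjacent ones would extend `B` to a stable set of size
`α + 1`. Hence `s_α · α ≤ s_{α-1} · ω ≤ s_{α-1} · α`.
-/

open Finset

section

variable {V : Type*} [Fintype V] {G : SimpleGraph V}

noncomputable def stableSetsOfCard (G : SimpleGraph V) (k : ℕ) : Finset (Finset V) :=
  (stableSets G).filter (·.card = k)

noncomputable def stableExtensions [DecidableEq V] (G : SimpleGraph V) (B : Finset V) : Finset V :=
  univ.filter fun v => v ∉ B ∧ insert v B ∈ stableSets G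

theorem mem_stableSets_iff {s : Finset V} :
    s ∈ stableSets G ↔ ∀ v ∈ s, ∀ w ∈ s, ¬ G.Adj v w := by
  simp [stableSets]

theorem mem_stableSetsOfCard_iff {s : Finset V} {k : ℕ} :
    s ∈ stableSetsOfCard G k ↔ s ∈ stableSets G ∧ #s = k := by
  simp [stableSetsOfCard]

theorem sCount_eq_card_stableSetsOfCard (k : ℕ) : sCount G k = #(stableSetsOfCard G k) := rfl

theorem mem_stableSets_iff_isClique_compl {s : Finset V} :
    s ∈ stableSets G ↔ Gᶜ.IsClique (s : Set V) := by
  rw [mem_stableSets_iff, SimpleGraph.IsClique, Set.Pairwise]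
  refine ⟨fun h v hv w hw hvw => ⟨hvw, h v hv w hw⟩, fun h v hv w hw hadj => ?_⟩
  exact (h hv hw hadj.ne).2 hadj

theorem mem_stableSets_of_subset {s t : Finset V} (hs : s ∈ stableSets G) (hts : t ⊆ s) :
    t ∈ stableSets G := by
  rw [mem_stableSets_iff_isClique_compl] at *
  exact hs.subset (coe_subset.2 hts)

theorem card_le_indepNum {s : Finset V} (hs : s ∈ stableSets G) : #s ≤ indepNum G :=
  le_sup hs

theorem insert_insert_mem_stableSets [DecidableEq V] {B : Finset V} {v w : V}
    (hv : insert v B ∈ stableSets G) (hw : insert w B ∈ stableSets G) (hvw : ¬ G.Adj v w) :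
    insert v (insert w B) ∈ stableSets G := by
  simp only [mem_stableSets_iff_isClique_compl, coe_insert, SimpleGraph.isClique_insert] at *
  exact ⟨hw, Set.forall_mem_insert.2 ⟨fun hne => ⟨hne, hvw⟩, hv.2⟩⟩

theorem stableExtensions_mem_stableSets_compl [DecidableEq V] {B : Finset V}
    (hB : indepNum G ≤ #B + 1) : stableExtensions G B ∈ stableSets Gᶜ := by
  rw [mem_stableSets_iff]
  rintro v hv w hw ⟨hne, hvw⟩
  simp only [stableExtensions, mem_filter, mem_univ, true_and] at hv hw
  have hcard : #(insert v (insert w B)) = #B + 2 := by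
    rw [card_insert_of_notMem (by simp [hne, hv.1]), card_insert_of_notMem hw.1]
  have := card_le_indepNum (insert_insert_mem_stableSets hv.2 hw.2 hvw)
  omega

theorem card_stableExtensions_le_cliqueNum [DecidableEq V] {B : Finset V}
    (hB : indepNum G ≤ #B + 1) : #(stableExtensions G B) ≤ cliqueNum G :=
  card_le_indepNum (stableExtensions_mem_stableSets_compl hB)

theorem filter_stableSetsOfCard_subset_eq_powersetCard [DecidableEq V] {A : Finset V}
    (hA : A ∈ stableSets G) (k : ℕ) :
    (stableSetsOfCard G k).filter (· ⊆ A) = A.powersetCard k := by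
  ext B
  simp only [mem_filter, mem_stableSetsOfCard_iff, mem_powersetCard]
  exact ⟨fun ⟨⟨_, hk⟩, hBA⟩ => ⟨hBA, hk⟩,
    fun ⟨hBA, hk⟩ => ⟨⟨mem_stableSets_of_subset hA hBA, hk⟩, hBA⟩⟩

theorem filter_stableSetsOfCard_succ_superset_subset_image [DecidableEq V] (B : Finset V) :
    (stableSetsOfCard G (#B + 1)).filter (B ⊆ ·) ⊆ (stableExtensions G B).image (insert · B) := by
  intro A hA
  simp only [mem_filter, mem_stableSetsOfCard_iff] at hA
  obtain ⟨v, hvB, rfl⟩ := exists_eq_insert_iff.2 ⟨hA.2, hA.1.2.symm⟩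
  exact mem_image_of_mem _ (by simp [stableExtensions, hvB, hA.1.1])

theorem sCount_succ_mul_le [DecidableEq V] {k m : ℕ}
    (hm : ∀ B ∈ stableSetsOfCard G k, #(stableExtensions G B) ≤ m) :
    sCount G (k + 1) * (k + 1) ≤ sCount G k * m := by
  rw [sCount_eq_card_stableSetsOfCard, sCount_eq_card_stableSetsOfCard]
  refine card_mul_le_card_mul (fun A B => B ⊆ A) (fun A hA => le_of_eq ?_) (fun B hB => ?_)
  · rw [mem_stableSetsOfCard_iff] at hA
    rw [bipartiteAbove, filter_stableSetsOfCard_subset_eq_powersetCard hA.1, card_powersetCard,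
      hA.2, Nat.choose_succ_self_right]
  · obtain ⟨-, rfl⟩ := mem_stableSetsOfCard_iff.1 hB
    calc #((stableSetsOfCard G (#B + 1)).bipartiteBelow (fun A B => B ⊆ A) B)
        ≤ #((stableExtensions G B).image (insert · B)) :=
          card_le_card (filter_stableSetsOfCard_succ_superset_subset_image B)
      _ ≤ #(stableExtensions G B) := card_image_le
      _ ≤ m := hm B hB

end

/-- If `ω(G) ≤ α(G)`, then `s_α ≤ s_{α-1}`. -/
theorem sCount_indepNum_le {V : Type*} [Fintype V] (G : SimpleGraph V)
    (h : cliqueNum G ≤ indepNum G) :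
    sCount G (indepNum G) ≤ sCount G (indepNum G - 1) := by
  classical
  cases hα : indepNum G with
  | zero => rfl
  | succ k =>
    rw [hα] at h
    refine Nat.le_of_mul_le_mul_right ?_ k.succ_pos
    calc sCount G (k + 1) * (k + 1)
        ≤ sCount G k * cliqueNum G := sCount_succ_mul_le fun B hB =>
          card_stableExtensions_le_cliqueNum (by rw [hα, (mem_stableSetsOfCard_iff.1 hB).2])
      _ ≤ sCount G k * (k + 1) := Nat.mul_le_mul_left _ h
end

section
/- The polynomial 1 + 42x + 107x² + 295x³ + 300x⁴ is unimodal but not log-concave, since 107² − 42·295 = −941 < 0. -/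
open Polynomial

/-- A polynomial is unimodal if its coefficient sequence increases up to some mode `k`
and decreases afterwards. -/
def PolyUnimodal (p : Polynomial ℝ) : Prop :=
  ∃ k, (∀ i j, i ≤ j → j ≤ k → p.coeff i ≤ p.coeff j) ∧
    (∀ i j, k ≤ i → i ≤ j → p.coeff j ≤ p.coeff i)

/-- A polynomial is log-concave if `a_{i-1} * a_{i+1} ≤ a_i ^ 2` for all `i ≥ 1`. -/
def PolyLogConcave (p : Polynomial ℝ) : Prop :=
  ∀ i, 1 ≤ i → p.coeff (i - 1) * p.coeff (i + 1) ≤ p.coeff i ^ 2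

lemma coeff_eq (n : ℕ) :
    (1 + 42 * X + 107 * X ^ 2 + 295 * X ^ 3 + 300 * X ^ 4 : Polynomial ℝ).coeff n =
      if n = 0 then 1 else if n = 1 then 42 else if n = 2 then 107 else
      if n = 3 then 295 else if n = 4 then 300 else 0 := by
  simp only [coeff_add, coeff_one, coeff_ofNat_mul, coeff_X, coeff_X_pow]
  rcases n with _ | _ | _ | _ | _ | n <;> norm_num
  split_ifs <;> first | omega | norm_num

/-- The polynomial `1 + 42x + 107x² + 295x³ + 300x⁴` is unimodal but not log-concave,
since `107² - 42·295 = -941 < 0`. -/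
theorem unimodal_not_logConcave_example :
    PolyUnimodal (1 + 42 * X + 107 * X ^ 2 + 295 * X ^ 3 + 300 * X ^ 4) ∧
    ¬ PolyLogConcave (1 + 42 * X + 107 * X ^ 2 + 295 * X ^ 3 + 300 * X ^ 4) ∧
    (107 : ℤ) ^ 2 - 42 * 295 = -941 := by
  refine ⟨⟨4, ?_, ?_⟩, ?_, by norm_num⟩
  · intro i j hij hj4
    rw [coeff_eq, coeff_eq]
    interval_cases j <;> interval_cases i <;> norm_num
  · intro i j h4i hij
    rw [coeff_eq, coeff_eq]
    have hj : ¬ j = 0 := by omega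
    have hj1 : ¬ j = 1 := by omega
    have hj2 : ¬ j = 2 := by omega
    have hj3 : ¬ j = 3 := by omega
    have hi : ¬ i = 0 := by omega
    have hi1 : ¬ i = 1 := by omega
    have hi2 : ¬ i = 2 := by omega
    have hi3 : ¬ i = 3 := by omega
    by_cases hj4 : j = 4
    · have : i = 4 := by omega
      simp [this, hj4]
    · by_cases hi4 : i = 4 <;> simp [hi, hi1, hi2, hi3, hi4, hj, hj1, hj2, hj3, hj4]
  · intro h
    have := h 2 (by norm_num)
    rw [show (2:ℕ) - 1 = 1 from rfl, coeff_eq, coeff_eq, coeff_eq] at this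
    norm_num at this
end

section
/- The product of the unimodal polynomials (1 + 121x + 147x² + 343x³) and (1 + 111x + 147x² + 343x³) equals 1 + 232x + 13725x² + 34790x³ + 101185x⁴ + 100842x⁵ + 117649x⁶, which is not unimodal (since the coefficient of x⁴ exceeds that of x⁵, which is less than that of x⁶). -/
open Polynomial

lemma cubic_coeff (a b c : ℝ) (n : ℕ) :
    (1 + C a * X + C b * X ^ 2 + C c * X ^ 3).coeff n =
      if n = 0 then 1 else if n = 1 then a else if n = 2 then b
      else if n = 3 then c else 0 := by
  rcases n with _|_|_|_|n <;>
    simp [coeff_add, coeff_one, coeff_C_mul, coeff_X_pow, coeff_X]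

lemma cubic_unimodal (a b c : ℝ) (h0 : (1:ℝ) ≤ a) (h1 : a ≤ b) (h2 : b ≤ c)
    (hc : 0 ≤ c) :
    PolyUnimodal (1 + C a * X + C b * X ^ 2 + C c * X ^ 3) := by
  refine ⟨3, ?_, ?_⟩
  · intro i j hij hj
    rw [cubic_coeff, cubic_coeff]
    split_ifs <;> first | linarith | omega
  · intro i j hi hij
    rw [cubic_coeff, cubic_coeff]
    split_ifs <;> first | linarith | omega

lemma sextic_coeff (n : ℕ) :
    ((1 + 232 * X + 13725 * X ^ 2 + 34790 * X ^ 3 + 101185 * X ^ 4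
        + 100842 * X ^ 5 + 117649 * X ^ 6 : Polynomial ℝ)).coeff n =
      if n = 0 then 1 else if n = 1 then 232 else if n = 2 then 13725
      else if n = 3 then 34790 else if n = 4 then 101185
      else if n = 5 then 100842 else if n = 6 then 117649 else 0 := by
  rcases n with _|_|_|_|_|_|_|n <;>
    simp [coeff_add, coeff_one, coeff_ofNat_mul, coeff_X_pow, coeff_X]

/-- The product of the unimodal polynomials `1 + 121x + 147x² + 343x³` and
`1 + 111x + 147x² + 343x³` equals
`1 + 232x + 13725x² + 34790x³ + 101185x⁴ + 100842x⁵ + 117649x⁶`, which is not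
unimodal. -/
theorem product_of_unimodal_not_unimodal :
    PolyUnimodal (1 + 121 * X + 147 * X ^ 2 + 343 * X ^ 3) ∧
    PolyUnimodal (1 + 111 * X + 147 * X ^ 2 + 343 * X ^ 3) ∧
    ((1 + 121 * X : Polynomial ℝ) + 147 * X ^ 2 + 343 * X ^ 3) * (1 + 111 * X + 147 * X ^ 2 + 343 * X ^ 3)
      = 1 + 232 * X + 13725 * X ^ 2 + 34790 * X ^ 3 + 101185 * X ^ 4
        + 100842 * X ^ 5 + 117649 * X ^ 6 ∧
    ¬ PolyUnimodal (1 + 232 * X + 13725 * X ^ 2 + 34790 * X ^ 3 + 101185 * X ^ 4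
        + 100842 * X ^ 5 + 117649 * X ^ 6) := by
  have e1 : (1 + 121 * X + 147 * X ^ 2 + 343 * X ^ 3 : Polynomial ℝ)
      = 1 + C 121 * X + C 147 * X ^ 2 + C 343 * X ^ 3 := by
    push_cast [map_ofNat]; norm_num
  have e2 : (1 + 111 * X + 147 * X ^ 2 + 343 * X ^ 3 : Polynomial ℝ)
      = 1 + C 111 * X + C 147 * X ^ 2 + C 343 * X ^ 3 := by
    push_cast [map_ofNat]; norm_num
  refine ⟨?_, ?_, ?_, ?_⟩
  · rw [e1]; exact cubic_unimodal _ _ _ (by norm_num) (by norm_num) (by norm_num) (by norm_num)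
  · rw [e2]; exact cubic_unimodal _ _ _ (by norm_num) (by norm_num) (by norm_num) (by norm_num)
  · ring
  · rintro ⟨k, hinc, hdec⟩
    rcases le_or_gt k 4 with hk | hk
    · have := hdec 5 6 (by omega) (by omega)
      rw [sextic_coeff, sextic_coeff] at this
      norm_num at this
    · have := hinc 4 5 (by omega) (by omega)
      rw [sextic_coeff, sextic_coeff] at this
      norm_num at this
end

section
/- The product of the log-concave polynomial 1 + 61x + 147x² + 343x³ and the unimodal polynomial 1 + 131x + 147x² + 343x³ equals 1 + 192x + 8285x² + 28910x³ + 87465x⁴ + 100842x⁵ + 117649x⁶, which is unimodal but not log-concave. -/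
open Polynomial

/-- The product of the log-concave polynomial `1 + 61x + 147x² + 343x³` and the
unimodal polynomial `1 + 131x + 147x² + 343x³` equals
`1 + 192x + 8285x² + 28910x³ + 87465x⁴ + 100842x⁵ + 117649x⁶`, which is unimodal
but not log-concave. -/
theorem product_unimodal_not_logConcave :
    PolyLogConcave (1 + 61 * X + 147 * X ^ 2 + 343 * X ^ 3) ∧
    PolyUnimodal (1 + 131 * X + 147 * X ^ 2 + 343 * X ^ 3) ∧
    ((1 + 61 * X + 147 * X ^ 2 + 343 * X ^ 3 : Polynomial ℝ)) * (1 + 131 * X + 147 * X ^ 2 + 343 * X ^ 3)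
      = 1 + 192 * X + 8285 * X ^ 2 + 28910 * X ^ 3 + 87465 * X ^ 4
        + 100842 * X ^ 5 + 117649 * X ^ 6 ∧
    PolyUnimodal (1 + 192 * X + 8285 * X ^ 2 + 28910 * X ^ 3 + 87465 * X ^ 4
        + 100842 * X ^ 5 + 117649 * X ^ 6) ∧
    ¬ PolyLogConcave (1 + 192 * X + 8285 * X ^ 2 + 28910 * X ^ 3 + 87465 * X ^ 4
        + 100842 * X ^ 5 + 117649 * X ^ 6) := by
  set p : Polynomial ℝ := 1 + 61 * X + 147 * X ^ 2 + 343 * X ^ 3 with hp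
  set r : Polynomial ℝ := 1 + 131 * X + 147 * X ^ 2 + 343 * X ^ 3 with hr
  set q : Polynomial ℝ := 1 + 192 * X + 8285 * X ^ 2 + 28910 * X ^ 3 + 87465 * X ^ 4
        + 100842 * X ^ 5 + 117649 * X ^ 6 with hq
  have pz : ∀ n, 4 ≤ n → p.coeff n = 0 := by
    intro n hn
    apply coeff_eq_zero_of_natDegree_lt
    have : p.natDegree ≤ 3 := by rw [hp]; compute_degree
    omega
  have rz : ∀ n, 4 ≤ n → r.coeff n = 0 := by
    intro n hn
    apply coeff_eq_zero_of_natDegree_lt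
    have : r.natDegree ≤ 3 := by rw [hr]; compute_degree
    omega
  have qz : ∀ n, 7 ≤ n → q.coeff n = 0 := by
    intro n hn
    apply coeff_eq_zero_of_natDegree_lt
    have : q.natDegree ≤ 6 := by rw [hq]; compute_degree
    omega
  have p0 : p.coeff 0 = 1 := by rw [hp]; simp [coeff_one, coeff_X]
  have p1 : p.coeff 1 = 61 := by rw [hp]; simp [coeff_one, coeff_X]
  have p2 : p.coeff 2 = 147 := by rw [hp]; simp [coeff_one, coeff_X]
  have p3 : p.coeff 3 = 343 := by rw [hp]; simp [coeff_one, coeff_X]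
  have r0 : r.coeff 0 = 1 := by rw [hr]; simp [coeff_one, coeff_X]
  have r1 : r.coeff 1 = 131 := by rw [hr]; simp [coeff_one, coeff_X]
  have r2 : r.coeff 2 = 147 := by rw [hr]; simp [coeff_one, coeff_X]
  have r3 : r.coeff 3 = 343 := by rw [hr]; simp [coeff_one, coeff_X]
  have q0 : q.coeff 0 = 1 := by rw [hq]; simp [coeff_one, coeff_X]
  have q1 : q.coeff 1 = 192 := by rw [hq]; simp [coeff_one, coeff_X]
  have q2 : q.coeff 2 = 8285 := by rw [hq]; simp [coeff_one, coeff_X]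
  have q3 : q.coeff 3 = 28910 := by rw [hq]; simp [coeff_one, coeff_X]
  have q4 : q.coeff 4 = 87465 := by rw [hq]; simp [coeff_one, coeff_X]
  have q5 : q.coeff 5 = 100842 := by rw [hq]; simp [coeff_one, coeff_X]
  have q6 : q.coeff 6 = 117649 := by rw [hq]; simp [coeff_one, coeff_X]
  refine ⟨?_, ⟨3, ?_, ?_⟩, by rw [hp, hr, hq]; ring, ⟨6, ?_, ?_⟩, ?_⟩
  · intro i hi
    rcases le_or_gt i 3 with h | h
    · interval_cases i <;> norm_num [p0, p1, p2, p3, pz]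
    · rw [pz (i + 1) (by omega), mul_zero]
      positivity
  · intro i j hij hj
    interval_cases j <;> interval_cases i <;> norm_num [r0, r1, r2, r3]
  · intro i j hi hij
    rcases le_or_gt j 3 with h | h
    · have : i = 3 := by omega
      subst this
      have : j = 3 := by omega
      subst this
      exact le_refl _
    · rw [rz j (by omega)]
      rcases le_or_gt i 3 with h' | h'
      · have : i = 3 := by omega
        rw [this, r3]; norm_num
      · simp [rz i (by omega)]
  · intro i j hij hj
    interval_cases j <;> interval_cases i <;> norm_num [q0, q1, q2, q3, q4, q5, q6]
  · intro i j hi hij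
    rcases le_or_gt j 6 with h | h
    · have hi6 : i = 6 := by omega
      have hj6 : j = 6 := by omega
      rw [hi6, hj6]
    · rw [qz j (by omega)]
      rcases le_or_gt i 6 with h' | h'
      · have : i = 6 := by omega
        rw [this, q6]; norm_num
      · simp [qz i (by omega)]
  · intro hlc
    have := hlc 5 (by norm_num)
    rw [show (5:ℕ) - 1 = 4 from rfl, show (5:ℕ) + 1 = 6 from rfl, q4, q5, q6] at this
    norm_num at this
end

section
/- For every natural number n with 1700 < n < 2000, the polynomial 1 + (40+4n)x + (600+6n)x² + (4000+4n)x³ + (10000+n)x⁴ is not unimodal; specifically, its x² coefficient exceeds its x³ coefficient, which is less than its x⁴ coefficient. -/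
open Polynomial

/-- For `1700 < n < 2000`, the polynomial
`1 + (40+4n)x + (600+6n)x² + (4000+4n)x³ + (10000+n)x⁴` is not unimodal;
its `x²` coefficient exceeds its `x³` coefficient, which is less than its `x⁴`
coefficient. -/
theorem Hn_not_unimodal (n : ℕ) (h1 : 1700 < n) (h2 : n < 2000) :
    4000 + 4 * n < 600 + 6 * n ∧ 4000 + 4 * n < 10000 + n ∧
    ¬ PolyUnimodal (1 + (40 + 4 * (n : Polynomial ℝ)) * X
        + (600 + 6 * (n : Polynomial ℝ)) * X ^ 2
        + (4000 + 4 * (n : Polynomial ℝ)) * X ^ 3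
        + (10000 + (n : Polynomial ℝ)) * X ^ 4) := by
  refine ⟨by omega, by omega, ?_⟩
  rintro ⟨k, hinc, hdec⟩
  set p : Polynomial ℝ := 1 + (40 + 4 * (n : Polynomial ℝ)) * X
      + (600 + 6 * (n : Polynomial ℝ)) * X ^ 2
      + (4000 + 4 * (n : Polynomial ℝ)) * X ^ 3
      + (10000 + (n : Polynomial ℝ)) * X ^ 4 with hp
  have hc2 : p.coeff 2 = (600 + 6 * n : ℝ) := by
    simp [hp, coeff_add, coeff_one, coeff_natCast_ite, mul_comm, coeff_mul_X_pow']
  have hc3 : p.coeff 3 = (4000 + 4 * n : ℝ) := by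
    simp [hp, coeff_add, coeff_one, coeff_natCast_ite, mul_comm, coeff_mul_X_pow']
  have hc4 : p.coeff 4 = (10000 + n : ℝ) := by
    simp [hp, coeff_add, coeff_one, coeff_natCast_ite, mul_comm, coeff_mul_X_pow']
  have hn : (1700 : ℝ) < n := by exact_mod_cast h1
  have hn2 : (n : ℝ) < 2000 := by exact_mod_cast h2
  rcases le_or_gt k 3 with hk | hk
  · have := hdec 3 4 hk (by norm_num)
    rw [hc3, hc4] at this
    linarith
  · have := hinc 2 3 (by norm_num) hk.le
    rw [hc2, hc3] at this
    linarith
end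

section
/- For every natural number k ≥ 0, the polynomial (1 + 6844x + 10806x² + 10804x³ + 11701x⁴)·(1 + 1000k·x)^k, written as ∑_{i=0}^{k+4} s_i x^i, satisfies s_{k+2} > s_{k+3} and s_{k+3} < s_{k+4}; in particular it is not unimodal. -/
open Polynomial

lemma coeff_one_add_CX_pow (a : ℝ) (n i : ℕ) :
    ((1 + C a * X) ^ n).coeff i = a ^ i * n.choose i := by
  have h : (1 + C a * X) ^ n = ∑ j ∈ Finset.range (n + 1),
      C (a ^ j * n.choose j) * X ^ j := by
    rw [add_comm, add_pow]
    refine Finset.sum_congr rfl fun j _ => ?_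
    rw [one_pow, mul_one, mul_pow, ← C_pow,
      show ((n.choose j : ℝ[X])) = C (n.choose j : ℝ) from (map_natCast C _).symm, map_mul]
    ring
  rw [h, finset_sum_coeff]
  simp only [coeff_C_mul_X_pow]
  rw [Finset.sum_ite_eq (Finset.range (n + 1)) i]
  split_ifs with h'
  · rfl
  · simp only [Finset.mem_range, not_lt] at h'
    simp [Nat.choose_eq_zero_of_lt h']

lemma coeff_f_mul (q : ℝ[X]) (m : ℕ) :
    ((1 + 6844 * X + 10806 * X ^ 2 + 10804 * X ^ 3 + 11701 * X ^ 4 : Polynomial ℝ) * q).coeff m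
      = q.coeff m + 6844 * (X ^ 1 * q).coeff m + 10806 * (X ^ 2 * q).coeff m
        + 10804 * (X ^ 3 * q).coeff m + 11701 * (X ^ 4 * q).coeff m := by
  have hf : (1 + 6844 * X + 10806 * X ^ 2 + 10804 * X ^ 3 + 11701 * X ^ 4 : Polynomial ℝ) * q
      = q + 6844 * (X ^ 1 * q) + 10806 * (X ^ 2 * q) + 10804 * (X ^ 3 * q)
        + 11701 * (X ^ 4 * q) := by ring
  rw [hf]
  simp only [coeff_add, coeff_ofNat_mul]

/-- For every `k ≥ 0`, the polynomial
`(1 + 6844x + 10806x² + 10804x³ + 11701x⁴)(1 + 1000k·x)^k = ∑ s_i x^i`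
satisfies `s_{k+2} > s_{k+3} < s_{k+4}`; in particular it is not unimodal. -/
theorem lemma_not_unimodal (k : ℕ) :
    (((1 + 6844 * X + 10806 * X ^ 2 + 10804 * X ^ 3 + 11701 * X ^ 4 : Polynomial ℝ)
        * (1 + (1000 * (k : Polynomial ℝ)) * X) ^ k).coeff (k + 3)
      < ((1 + 6844 * X + 10806 * X ^ 2 + 10804 * X ^ 3 + 11701 * X ^ 4 : Polynomial ℝ)
        * (1 + (1000 * (k : Polynomial ℝ)) * X) ^ k).coeff (k + 2)) ∧
    (((1 + 6844 * X + 10806 * X ^ 2 + 10804 * X ^ 3 + 11701 * X ^ 4 : Polynomial ℝ)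
        * (1 + (1000 * (k : Polynomial ℝ)) * X) ^ k).coeff (k + 3)
      < ((1 + 6844 * X + 10806 * X ^ 2 + 10804 * X ^ 3 + 11701 * X ^ 4 : Polynomial ℝ)
        * (1 + (1000 * (k : Polynomial ℝ)) * X) ^ k).coeff (k + 4)) ∧
    ¬ PolyUnimodal ((1 + 6844 * X + 10806 * X ^ 2 + 10804 * X ^ 3 + 11701 * X ^ 4)
        * (1 + (1000 * (k : Polynomial ℝ)) * X) ^ k) := by
  set q : ℝ[X] := (1 + (1000 * (k : Polynomial ℝ)) * X) ^ k with hqdef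
  set p : ℝ[X] := (1 + 6844 * X + 10806 * X ^ 2 + 10804 * X ^ 3 + 11701 * X ^ 4) * q with hpdef
  -- coefficients of q
  have hq : ∀ i, q.coeff i = (1000 * k : ℝ) ^ i * k.choose i := by
    intro i
    have : q = (1 + C (1000 * (k : ℝ)) * X) ^ k := by
      rw [hqdef, map_mul, map_natCast, map_ofNat]
    rw [this, coeff_one_add_CX_pow]
  have hqnn : ∀ i, 0 ≤ q.coeff i := by
    intro i
    rw [hq]
    positivity
  have h12 : p.coeff (k + 3) < p.coeff (k + 2) ∧ p.coeff (k + 3) < p.coeff (k + 4) := by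
    rcases Nat.eq_zero_or_pos k with rfl | hk
    · have hq1 : q = 1 := by simp [hqdef]
      rw [hpdef, hq1, mul_one]
      norm_num [coeff_add, coeff_ofNat_mul, coeff_X_pow, coeff_one, coeff_X]
    · -- k ≥ 1
      have hK1 : (1 : ℝ) ≤ (k : ℝ) := by exact_mod_cast hk
      have ha : (0 : ℝ) < 1000 * k := by positivity
      set a : ℝ := 1000 * k with hadef
      have ht : (0 : ℝ) < a ^ (k - 1) := by positivity
      have hak : a ^ k = a ^ (k - 1) * a := by
        rw [← pow_succ]
        congr 1
        omega
      have hchoose0 : ∀ j, k < j → q.coeff j = 0 := by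
        intro j hj
        rw [hq, Nat.choose_eq_zero_of_lt hj]
        simp
      have hqk : q.coeff k = a ^ k := by
        rw [hq, Nat.choose_self]; simp
      have hqk1 : q.coeff (k - 1) = (k : ℝ) * a ^ (k - 1) := by
        rw [hq, Nat.choose_symm hk, Nat.choose_one_right]
        ring
      have e4 : p.coeff (k + 4) = 11701 * a ^ k := by
        rw [hpdef, coeff_f_mul]
        simp only [coeff_X_pow_mul']
        rw [hchoose0 (k+4) (by omega), hchoose0 (k+4-1) (by omega),
          hchoose0 (k+4-2) (by omega), hchoose0 (k+4-3) (by omega),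
          show k+4-4 = k by omega, hqk]
        norm_num
      have e3 : p.coeff (k + 3) = 10804 * a ^ k + 11701 * ((k : ℝ) * a ^ (k - 1)) := by
        rw [hpdef, coeff_f_mul]
        simp only [coeff_X_pow_mul']
        rw [hchoose0 (k+3) (by omega), hchoose0 (k+3-1) (by omega),
          hchoose0 (k+3-2) (by omega), show k+3-3 = k by omega, hqk,
          show k+3-4 = k-1 by omega]
        rw [if_pos (show 3 ≤ k + 3 by omega), if_pos (show 4 ≤ k + 3 by omega), hqk1]
        norm_num
      have e2 : p.coeff (k + 2) = 10806 * a ^ k + 10804 * ((k : ℝ) * a ^ (k - 1))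
          + 11701 * (if 4 ≤ k + 2 then q.coeff (k + 2 - 4) else 0) := by
        rw [hpdef, coeff_f_mul]
        simp only [coeff_X_pow_mul']
        rw [hchoose0 (k+2) (by omega), hchoose0 (k+2-1) (by omega),
          show k+2-2 = k by omega, hqk, show k+2-3 = k-1 by omega]
        rw [if_pos (show 3 ≤ k + 2 by omega), hqk1]
        norm_num
      have hQ2 : 0 ≤ (if 4 ≤ k + 2 then q.coeff (k + 2 - 4) else 0) := by
        split_ifs
        · exact hqnn _
        · exact le_rfl
      constructor
      · rw [e3, e2, hak]
        nlinarith [mul_pos (lt_of_lt_of_le one_pos hK1) ht]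
      · rw [e3, e4, hak]
        nlinarith [mul_pos (lt_of_lt_of_le one_pos hK1) ht]
  refine ⟨h12.1, h12.2, ?_⟩
  rintro ⟨m, hup, hdown⟩
  rcases le_total m (k + 3) with h | h
  · exact absurd (hdown (k + 3) (k + 4) h (by omega)) (not_le.mpr h12.2)
  · exact absurd (hup (k + 2) (k + 3) (by omega) h) (not_le.mpr h12.1)
end
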